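/- Let E ⊂ [−1/2, 1/2] be the Cantor-type set built from nested families 𝓘ₙ of closed intervals, where each interval of 𝓘ₙ of length rₙ contains mₙ₊₁ equally and maximally spaced intervals of 𝓘ₙ₊₁ of length rₙ₊₁, with mₙ₊₁·(rₙ₊₁)^s = rₙ^s and rₙ = 3^{−2^{n+m_s}}. Then the minimal gap sₙ₊₁ between distinct intervals of 𝓘ₙ₊₁ satisfies sₙ₊₁ ≍ rₙ^{1−s}·rₙ₊₁^{s}, and if m_s is chosen sufficiently large (depending on s < 1) then 3^{n+1}·rₙ₊₁ < sₙ₊₁ < rₙ/10 for all n ≥ 0. -/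

import Mathlib

/-- The scales `rₙ = 3^{-2^{n+ms}}` of the Cantor construction. -/
noncomputable def rScale (ms n : ℕ) : ℝ := (3 : ℝ) ^ (-(2 ^ (n + ms) : ℤ))

/-- The spacing `sₙ₊₁` between consecutive intervals of generation `n+1`: inside an interval
of length `rₙ` one places `mₙ₊₁ = 3^{p·2ⁿ}` equally spaced intervals of length `rₙ₊₁`
with the spacing as large as possible, so the gap is
`(rₙ − mₙ₊₁·rₙ₊₁)/(mₙ₊₁ − 1)`. -/
noncomputable def gapAfter (p ms n : ℕ) : ℝ :=
  (rScale ms n - (3 : ℝ) ^ (p * 2 ^ n) * rScale ms (n + 1)) / ((3 : ℝ) ^ (p * 2 ^ n) - 1)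

/-!
Write `y = rₙ` and `x = mₙ₊₁ = 3^{p·2ⁿ}`. Then `rₙ₊₁ = y²`, the geometric mean
`rₙ^{1-s} rₙ₊₁^{s}` is `y / x`, and `sₙ₊₁ = (y - x y²)/(x - 1)`, which lies between
`(2/3)·y/x` and `(3/2)·y/x` once `x ≥ 3` and `3xy ≤ 1`. Passing from `(p, ms)` to
`(p·2ʲ, ms + j)` with `j ≥ 2` forces `x ≥ 81`, giving `sₙ₊₁ < rₙ/10`, while
`2^{n+ms+j} ≥ (p+1)·2^{n+j} ≥ p·2^{n+j} + n + 2` keeps `3^{n+2}·x·y ≤ 1`, giving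
`3^{n+1} rₙ₊₁ = 3^{n+1}xy · (y/x) < sₙ₊₁`.
-/

lemma le_div_sub_mul_sq_div {x y : ℝ} (hx : 1 < x) (hy : 0 ≤ y) (hxy : 3 * (x * y) ≤ 1) :
    2 / 3 * (y / x) ≤ (y - x * y ^ 2) / (x - 1) := by
  have hx1 : 0 < x - 1 := by linarith
  rw [le_div_iff₀ hx1]
  calc 2 / 3 * (y / x) * (x - 1) ≤ 2 / 3 * (y / x) * x := by gcongr; linarith
    _ = 2 / 3 * y := by field_simp
    _ ≤ y - x * y ^ 2 := by nlinarith

lemma div_sub_mul_sq_div_le {x y : ℝ} (hx : 3 ≤ x) (hy : 0 ≤ y) :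
    (y - x * y ^ 2) / (x - 1) ≤ 3 / 2 * (y / x) := by
  have hx1 : 0 < x - 1 := by linarith
  calc (y - x * y ^ 2) / (x - 1) ≤ y / (x - 1) := by gcongr; nlinarith
    _ ≤ 3 / 2 * (y / x) := by
      rw [← mul_div_assoc, div_le_div_iff₀ hx1 (by linarith)]
      nlinarith

lemma rScale_pos (ms n : ℕ) : 0 < rScale ms n := zpow_pos (by norm_num) _

lemma rScale_eq_inv_pow (ms n : ℕ) : rScale ms n = ((3 : ℝ) ^ 2 ^ (n + ms))⁻¹ := by
  rw [rScale, zpow_neg, ← zpow_natCast]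
  norm_cast

lemma rScale_succ (ms n : ℕ) : rScale ms (n + 1) = rScale ms n ^ 2 := by
  rw [rScale_eq_inv_pow, rScale_eq_inv_pow, inv_pow, ← pow_mul, add_right_comm, pow_succ]

lemma rScale_rpow (ms n : ℕ) (t : ℝ) : rScale ms n ^ t = 3 ^ (-(2 : ℝ) ^ (n + ms) * t) := by
  rw [rScale, ← Real.rpow_intCast, ← Real.rpow_mul (by norm_num)]
  push_cast
  rfl

lemma rScale_rpow_mul_rScale_succ_rpow (p ms n : ℕ) :
    rScale ms n ^ (1 - (p : ℝ) / 2 ^ ms) * rScale ms (n + 1) ^ ((p : ℝ) / 2 ^ ms)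
      = rScale ms n / 3 ^ (p * 2 ^ n) := by
  rw [rScale_rpow, rScale_rpow, ← Real.rpow_add (by norm_num), ← Real.rpow_one (rScale ms n),
    rScale_rpow, ← Real.rpow_natCast (3 : ℝ) (p * 2 ^ n), ← Real.rpow_sub (by norm_num)]
  congr 1
  push_cast
  field_simp
  ring

lemma three_mul_pow_mul_rScale_le {k ms n : ℕ} (hk : k + 1 ≤ 2 ^ (n + ms)) :
    3 * ((3 : ℝ) ^ k * rScale ms n) ≤ 1 := by
  rw [rScale_eq_inv_pow, ← mul_assoc, ← pow_succ', ← div_eq_mul_inv,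
    div_le_one (by positivity)]
  exact pow_le_pow_right₀ (by norm_num) (by omega)

lemma gapAfter_eq (p ms n : ℕ) : gapAfter p ms n =
    (rScale ms n - 3 ^ (p * 2 ^ n) * rScale ms n ^ 2) / (3 ^ (p * 2 ^ n) - 1) := by
  rw [gapAfter, rScale_succ]

lemma gapAfter_bounds {p ms : ℕ} (hp : 0 < p) (hpms : p < 2 ^ ms) (n : ℕ) :
    2 / 3 * (rScale ms n / 3 ^ (p * 2 ^ n)) ≤ gapAfter p ms n ∧
      gapAfter p ms n ≤ 3 / 2 * (rScale ms n / 3 ^ (p * 2 ^ n)) := by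
  have hexp : 1 ≤ p * 2 ^ n := Nat.one_le_iff_ne_zero.mpr (by positivity)
  have hx : (3 : ℝ) ≤ 3 ^ (p * 2 ^ n) := le_self_pow₀ (by norm_num) (by omega)
  have hy := (rScale_pos ms n).le
  rw [gapAfter_eq]
  refine ⟨le_div_sub_mul_sq_div (by linarith) hy (three_mul_pow_mul_rScale_le ?_),
    div_sub_mul_sq_div_le hx hy⟩
  calc p * 2 ^ n + 1 ≤ 2 ^ ms * 2 ^ n := by nlinarith [Nat.two_pow_pos n]
    _ = 2 ^ (n + ms) := by rw [pow_add, mul_comm]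

lemma add_two_add_mul_two_pow_le {p ms j : ℕ} (hpms : p < 2 ^ ms) (hj : 2 ≤ j) (n : ℕ) :
    n + 2 + p * 2 ^ j * 2 ^ n ≤ 2 ^ (n + (ms + j)) := by
  have h4 : 4 ≤ 2 ^ j := by simpa using Nat.pow_le_pow_right two_pos hj
  have hn : n < 2 ^ n := Nat.lt_two_pow_self
  calc n + 2 + p * 2 ^ j * 2 ^ n ≤ 2 ^ n * 2 ^ j * (p + 1) := by nlinarith
    _ ≤ 2 ^ n * 2 ^ j * 2 ^ ms := by gcongr; omega
    _ = 2 ^ (n + (ms + j)) := by ring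

lemma mul_two_pow_lt_two_pow_add {p ms : ℕ} (hpms : p < 2 ^ ms) (j : ℕ) :
    p * 2 ^ j < 2 ^ (ms + j) := by
  rw [pow_add]
  exact Nat.mul_lt_mul_of_pos_right hpms (by positivity)

lemma pow_mul_rScale_succ_lt_gapAfter {p ms j : ℕ} (hp : 0 < p) (hpms : p < 2 ^ ms)
    (hj : 2 ≤ j) (n : ℕ) :
    3 ^ (n + 1) * rScale (ms + j) (n + 1) < gapAfter (p * 2 ^ j) (ms + j) n := by
  have hsmall := three_mul_pow_mul_rScale_le (k := n + 1 + p * 2 ^ j * 2 ^ n) (ms := ms + j)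
    (by linarith [add_two_add_mul_two_pow_le hpms hj n])
  rw [pow_add] at hsmall
  rw [rScale_succ]
  set y := rScale (ms + j) n
  set x : ℝ := 3 ^ (p * 2 ^ j * 2 ^ n)
  have hx : x ≠ 0 := by positivity
  have hyx : 0 < y / x := by positivity [rScale_pos (ms + j) n]
  calc 3 ^ (n + 1) * y ^ 2 = (3 ^ (n + 1) * x * y) * (y / x) := by field_simp
    _ ≤ 1 / 3 * (y / x) := by gcongr; linarith
    _ < 2 / 3 * (y / x) := by gcongr; norm_num
    _ ≤ gapAfter (p * 2 ^ j) (ms + j) n :=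
      (gapAfter_bounds (by positivity) (mul_two_pow_lt_two_pow_add hpms j) n).1

lemma gapAfter_lt_rScale_div_ten {p ms j : ℕ} (hp : 0 < p) (hpms : p < 2 ^ ms)
    (hj : 2 ≤ j) (n : ℕ) :
    gapAfter (p * 2 ^ j) (ms + j) n < rScale (ms + j) n / 10 := by
  have hy := rScale_pos (ms + j) n
  have hx : (81 : ℝ) ≤ 3 ^ (p * 2 ^ j * 2 ^ n) := by
    have : 4 ≤ p * 2 ^ j * 2 ^ n :=
      calc 4 ≤ 2 ^ j := by simpa using Nat.pow_le_pow_right two_pos hj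
        _ ≤ p * 2 ^ j := Nat.le_mul_of_pos_left _ hp
        _ ≤ p * 2 ^ j * 2 ^ n := Nat.le_mul_of_pos_right _ (by positivity)
    calc (81 : ℝ) = 3 ^ 4 := by norm_num
      _ ≤ 3 ^ (p * 2 ^ j * 2 ^ n) := pow_le_pow_right₀ (by norm_num) this
  calc gapAfter (p * 2 ^ j) (ms + j) n
      ≤ 3 / 2 * (rScale (ms + j) n / 3 ^ (p * 2 ^ j * 2 ^ n)) :=
        (gapAfter_bounds (by positivity) (mul_two_pow_lt_two_pow_add hpms j) n).2
    _ ≤ 3 / 2 * (rScale (ms + j) n / 81) := by gcongr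
    _ < rScale (ms + j) n / 10 := by linarith

/-- For the Cantor-type set of dimension `s = p/2^{ms} ∈ (0,1)`: the gaps satisfy
`sₙ₊₁ ≍ rₙ^{1−s}·rₙ₊₁^{s}` with absolute constants, and if the representation of `s` is
chosen with `ms` sufficiently large (replacing `(p, ms)` by `(p·2ʲ, ms+j)`), then
`3^{n+1}·rₙ₊₁ < sₙ₊₁ < rₙ/10` for all `n ≥ 0`. -/
theorem stmt15 :
    (∃ c C : ℝ, 0 < c ∧ 0 < C ∧ ∀ p ms : ℕ, 0 < p → p < 2 ^ ms → ∀ n : ℕ,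
      c * rScale ms n ^ (1 - (p : ℝ) / 2 ^ ms) * rScale ms (n + 1) ^ ((p : ℝ) / 2 ^ ms)
          ≤ gapAfter p ms n ∧
      gapAfter p ms n
          ≤ C * rScale ms n ^ (1 - (p : ℝ) / 2 ^ ms)
              * rScale ms (n + 1) ^ ((p : ℝ) / 2 ^ ms)) ∧
    (∀ p ms : ℕ, 0 < p → p < 2 ^ ms → ∃ M : ℕ, ∀ j : ℕ, M ≤ j → ∀ n : ℕ,
      3 ^ (n + 1) * rScale (ms + j) (n + 1) < gapAfter (p * 2 ^ j) (ms + j) n ∧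
      gapAfter (p * 2 ^ j) (ms + j) n < rScale (ms + j) n / 10) := by
  refine ⟨⟨2 / 3, 3 / 2, by norm_num, by norm_num, fun p ms hp hpms n => ?_⟩,
    fun p ms hp hpms => ⟨2, fun j hj n => ?_⟩⟩
  · simpa only [mul_assoc, rScale_rpow_mul_rScale_succ_rpow] using gapAfter_bounds hp hpms n
  · exact ⟨pow_mul_rScale_succ_lt_gapAfter hp hpms hj n, gapAfter_lt_rScale_div_ten hp hpms hj n⟩
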